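/- For 0 < k < n, the double discriminant DD_{n,k} is a homogeneous polynomial of total degree (3n-4)(n-1) in the variables {a_0,...,a_n} \ {a_k}. -/

import Mathlib

open MvPolynomial

/-- The Sylvester matrix of the polynomial `f = ∑_{i=0}^n a i * x^i` (of formal degree `n`)
and its derivative `f'`; its determinant is the resultant `Res(f, f')`.  The first `n - 1`
rows contain the shifted coefficient sequences `a_n, …, a_0` of `f`, and the last `n` rows
contain the shifted coefficient sequences `n·a_n, …, 1·a_1` of `f'`. -/
noncomputable def sylv {R : Type*} [CommRing R] (n : ℕ) (a : ℕ → R) :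
    Matrix (Fin (2 * n - 1)) (Fin (2 * n - 1)) R :=
  Matrix.of fun i j =>
    if (i : ℕ) < n - 1 then
      (if (i : ℕ) ≤ (j : ℕ) ∧ (j : ℕ) ≤ (i : ℕ) + n then a (n - ((j : ℕ) - (i : ℕ))) else 0)
    else
      (if (i : ℕ) - (n - 1) ≤ (j : ℕ) ∧ (j : ℕ) < (i : ℕ) - (n - 1) + n then
        (n - ((j : ℕ) - ((i : ℕ) - (n - 1)))) • a (n - ((j : ℕ) - ((i : ℕ) - (n - 1))))
      else 0)


abbrev w1 : ℕ → ℤ := fun _ => 1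

lemma wh_to_homog {p : MvPolynomial ℕ ℤ} {d : ℕ}
    (h : p.IsWeightedHomogeneous w1 (d : ℤ)) : p.IsHomogeneous d := by
  intro m hm
  have h2 := h hm
  simp only [Finsupp.weight_apply, Finsupp.sum, smul_eq_mul, mul_one, w1,
    Pi.one_apply, nsmul_eq_mul, Nat.cast_sum] at h2 ⊢
  exact_mod_cast h2

lemma homog_to_wh {p : MvPolynomial ℕ ℤ} {d : ℕ}
    (h : p.IsHomogeneous d) : p.IsWeightedHomogeneous w1 (d : ℤ) := by
  intro m hm
  have h2 := h hm
  simp only [Finsupp.weight_apply, Finsupp.sum, smul_eq_mul, mul_one, w1,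
    Pi.one_apply, nsmul_eq_mul, Nat.cast_sum] at h2 ⊢
  exact_mod_cast h2

lemma wh_zsmul {p : MvPolynomial ℕ ℤ} {d : ℤ} (z : ℤ)
    (h : p.IsWeightedHomogeneous w1 d) : (z • p).IsWeightedHomogeneous w1 d := by
  intro m hm
  rw [coeff_smul] at hm
  exact h (right_ne_zero_of_mul hm)

lemma wh_det {m : ℕ} (M : Matrix (Fin m) (Fin m) (MvPolynomial ℕ ℤ)) (r s : Fin m → ℤ)
    (h : ∀ i j, (M i j).IsWeightedHomogeneous w1 (r i + s j)) :
    M.det.IsWeightedHomogeneous w1 (∑ i, r i + ∑ j, s j) := by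
  rw [Matrix.det_apply]
  apply IsWeightedHomogeneous.sum
  intro σ _
  have hp : (∏ j, M (σ j) j).IsWeightedHomogeneous w1 (∑ i, r i + ∑ j, s j) := by
    have := IsWeightedHomogeneous.prod Finset.univ (fun j => M (σ j) j)
      (fun j => r (σ j) + s j) (fun j _ => h (σ j) j)
    rwa [Finset.sum_add_distrib, Equiv.sum_comp σ r] at this
  have : (Equiv.Perm.sign σ • ∏ j, M (σ j) j) = ((Equiv.Perm.sign σ : ℤ) • ∏ j, M (σ j) j) := by
    rw [Units.smul_def]
  rw [this]
  exact wh_zsmul _ hp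

lemma coeff_prod_nd {R : Type*} [CommRing R] {ι : Type*} (s : Finset ι) (f : ι → Polynomial R)
    (d : ι → ℕ) (h : ∀ i ∈ s, (f i).natDegree ≤ d i) :
    (∏ i ∈ s, f i).coeff (∑ i ∈ s, d i) = ∏ i ∈ s, (f i).coeff (d i) := by
  classical
  induction s using Finset.induction_on with
  | empty => simp
  | insert _ _ hx ih =>
    rename_i a t
    rw [Finset.prod_insert hx, Finset.sum_insert hx, Finset.prod_insert hx]
    rw [Polynomial.coeff_mul_add_eq_of_natDegree_le (h a (Finset.mem_insert_self a t))
      ((Polynomial.natDegree_prod_le t f).trans (Finset.sum_le_sum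
        (fun i hi => h i (Finset.mem_insert_of_mem hi))))]
    rw [ih (fun i hi => h i (Finset.mem_insert_of_mem hi))]

lemma coeff_det {R : Type*} [CommRing R] {m : ℕ} (M : Matrix (Fin m) (Fin m) (Polynomial R))
    (cdeg : Fin m → ℕ) (h : ∀ i j, (M i j).natDegree ≤ cdeg j) :
    (M.det).coeff (∑ j, cdeg j) = (Matrix.of fun i j => (M i j).coeff (cdeg j)).det := by
  rw [Matrix.det_apply, Matrix.det_apply, Polynomial.finset_sum_coeff]
  refine Finset.sum_congr rfl (fun σ _ => ?_)
  rw [Polynomial.coeff_smul]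
  congr 1
  exact coeff_prod_nd Finset.univ (fun j => M (σ j) j) cdeg (fun j _ => h (σ j) j)

lemma homog_of_mul {p q : MvPolynomial ℕ ℤ} {a b : ℕ} (hp0 : p ≠ 0)
    (hp : p.IsHomogeneous a) (hpq : (p * q).IsHomogeneous (a + b)) :
    q.IsHomogeneous b := by
  by_cases hq0 : q = 0
  · subst hq0; exact isHomogeneous_zero _ _ _
  set N := q.totalDegree + 1 with hN
  have hqsum : q = ∑ i ∈ Finset.range N, homogeneousComponent i q :=
    (sum_homogeneousComponent q).symm
  have key : ∀ d, d ≠ b → homogeneousComponent d q = 0 := by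
    intro d hd
    by_contra hcd
    have hd_lt : d < N := by
      by_contra hge
      exact hcd (homogeneousComponent_eq_zero d q (by omega))
    -- the (a+d) homogeneous component of p*q is p * (component d q)
    have hcomp : homogeneousComponent (a + d) (p * q) = p * homogeneousComponent d q := by
      conv_lhs => rw [show p * q = ∑ i ∈ Finset.range N, p * homogeneousComponent i q by
        rw [← Finset.mul_sum, ← hqsum]]
      rw [map_sum]
      rw [Finset.sum_eq_single d]
      · exact homogeneousComponent_of_mem
          ((mem_homogeneousSubmodule _ _).2
            (hp.mul (homogeneousComponent_isHomogeneous d q))) |>.trans (if_pos rfl)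
      · intro i _ hi
        have haux : a + d ≠ a + i := fun hcon => hi (by omega)
        exact homogeneousComponent_of_mem
          ((mem_homogeneousSubmodule _ _).2
            (hp.mul (homogeneousComponent_isHomogeneous i q))) |>.trans
            (if_neg haux)
      · intro hdn; exact absurd (Finset.mem_range.2 hd_lt) hdn
    have hzero : homogeneousComponent (a + d) (p * q) = 0 := by
      rw [homogeneousComponent_of_mem ((mem_homogeneousSubmodule _ _).2 hpq)]
      exact if_neg (fun hcon => hd (by omega))
    rw [hcomp] at hzero
    exact hcd ((mul_eq_zero.1 hzero).resolve_left hp0)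
  have hq : q = homogeneousComponent b q := by
    conv_lhs => rw [hqsum]
    by_cases hb : b < N
    · rw [Finset.sum_eq_single b (fun i _ hi => key i hi) (fun h => absurd (Finset.mem_range.2 hb) h)]
    · exfalso
      apply hq0
      rw [hqsum]
      apply Finset.sum_eq_zero
      intro i hi
      exact key i (by simp at hi; omega)
  rw [hq]
  exact homogeneousComponent_isHomogeneous b q

lemma sylv_map {R S : Type*} [CommRing R] [CommRing S] (f : R →+* S) (n : ℕ) (a : ℕ → R) :
    (sylv n a).map f = sylv n (fun i => f (a i)) := by
  ext i j
  simp only [sylv, Matrix.map_apply, Matrix.of_apply]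
  split_ifs <;> simp

-- image of a polynomial not involving variable k under a specialization sending
-- all other variables to constants is a constant
lemma natDegree_spec (k : ℕ) (g : ℕ → Polynomial ℤ) (hg : ∀ i, i ≠ k → (g i).natDegree = 0)
    (p : MvPolynomial ℕ ℤ) (hp : p.degreeOf k = 0) :
    (eval₂ Polynomial.C g p).natDegree = 0 := by
  have hsupp : ∀ m ∈ p.support, m k = 0 := by
    intro m hm
    have := MvPolynomial.degreeOf_eq_sup k p ▸ hp
    have h2 : m k ≤ p.support.sup fun m => m k := Finset.le_sup (f := fun m => m k) hm
    omega
  have hle : (eval₂ Polynomial.C g p).natDegree ≤ 0 := by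
    conv_lhs => rw [← MvPolynomial.support_sum_monomial_coeff p]
    show (((eval₂Hom Polynomial.C g : MvPolynomial ℕ ℤ →+* Polynomial ℤ))
      (∑ v ∈ p.support, monomial v (coeff v p))).natDegree ≤ 0
    rw [map_sum (eval₂Hom Polynomial.C g : MvPolynomial ℕ ℤ →+* Polynomial ℤ)
      (fun m => monomial m (coeff m p)) p.support]
    apply Polynomial.natDegree_sum_le_of_forall_le
    intro m hm
    show ((eval₂Hom Polynomial.C g) (monomial m (coeff m p))).natDegree ≤ 0
    rw [eval₂Hom_monomial]
    refine (Polynomial.natDegree_mul_le).trans ?_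
    simp only [Polynomial.natDegree_C, zero_add, Nat.le_zero]
    have : (Finsupp.prod m fun i e => g i ^ e) = ∏ i ∈ m.support, g i ^ m i := rfl
    rw [this]
    have hb : (∏ i ∈ m.support, g i ^ m i).natDegree ≤ ∑ i ∈ m.support, (g i ^ m i).natDegree :=
      Polynomial.natDegree_prod_le _ _
    have hz : ∀ i ∈ m.support, (g i ^ m i).natDegree = 0 := by
      intro i hi
      have hik : i ≠ k := by
        intro h; subst h; exact (Finsupp.mem_support_iff.1 hi) (hsupp m hm)
      refine Nat.le_zero.1 ((Polynomial.natDegree_pow_le).trans ?_)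
      rw [hg i hik, mul_zero]
    rw [Finset.sum_eq_zero hz] at hb
    omega
  omega

example (g : ℕ → Polynomial ℤ) (m : ℕ →₀ ℕ) (r : ℤ) :
    eval₂ Polynomial.C g (monomial m r) = Polynomial.C r * ∏ i ∈ m.support, g i ^ m i := by
  rw [eval₂_monomial]; rfl

def cdeg (n k : ℕ) (j : ℕ) : ℕ := if n - k ≤ j ∧ j ≤ 2 * n - 1 - k then 1 else 0

noncomputable def gfun (n k : ℕ) : ℕ → Polynomial ℤ := fun i =>
  if i = k then Polynomial.X else if i = 0 ∨ i = n then 1 else 0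

def LexM (n k : ℕ) (I J : ℕ) : ℤ :=
  if I < n - 1 then
    (if I < n - k then (if J = I then 1 else if J = I + (n - k) then 1 else 0)
     else (if J = I + (n - k) then 1 else if J = I + n then 1 else 0))
  else
    (if I < n - 1 + (n - k) then
       (if J = I - (n - 1) then (n : ℤ) else if J = I - (n - 1) + (n - k) then (k : ℤ) else 0)
     else (if J = I - (n - 1) + (n - k) then (k : ℤ) else 0))

lemma Lentry (n k : ℕ) (hn : 2 ≤ n) (hk0 : 0 < k) (hkn : k < n) (i j : Fin (2 * n - 1)) :
    (sylv n (gfun n k) i j).coeff (cdeg n k (j : ℕ)) = LexM n k (i : ℕ) (j : ℕ) := by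
  have hi := i.isLt
  have hj := j.isLt
  set I := (i : ℕ) with hI
  set J := (j : ℕ) with hJ
  simp only [sylv, Matrix.of_apply, LexM, cdeg]
  by_cases h1 : I < n - 1
  · rw [if_pos h1, if_pos h1]
    by_cases h2 : I ≤ J ∧ J ≤ I + n
    · rw [if_pos h2]
      by_cases hJ1 : J = I + (n - k)
      · have hs : n - (J - I) = k := by omega
        rw [hs]
        have hcol : n - k ≤ J ∧ J ≤ 2 * n - 1 - k := by omega
        rw [if_pos hcol]
        have hgk : gfun n k k = Polynomial.X := by simp [gfun]
        rw [hgk, Polynomial.coeff_X_one]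
        split_ifs with e1 e2 e3 <;> omega
      · by_cases hJ2 : J = I
        · have hs : n - (J - I) = n := by omega
          rw [hs]
          have hgn : gfun n k n = 1 := by simp [gfun]; omega
          rw [hgn]
          by_cases hc : n - k ≤ J ∧ J ≤ 2 * n - 1 - k
          · rw [if_pos hc, Polynomial.coeff_one]
            norm_num
            split_ifs with e1 e2 e3 e4 <;> omega
          · rw [if_neg hc, Polynomial.coeff_one]
            norm_num
            split_ifs with e1 e2 e3 e4 <;> omega
        · by_cases hJ3 : J = I + n
          · have hs : n - (J - I) = 0 := by omega
            rw [hs]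
            have hg0 : gfun n k 0 = 1 := by simp [gfun]; omega
            rw [hg0]
            by_cases hc : n - k ≤ J ∧ J ≤ 2 * n - 1 - k
            · rw [if_pos hc, Polynomial.coeff_one]
              norm_num
              split_ifs with e1 e2 e3 e4 <;> omega
            · rw [if_neg hc, Polynomial.coeff_one]
              norm_num
              split_ifs with e1 e2 e3 e4 <;> omega
          · have hg : gfun n k (n - (J - I)) = 0 := by
              simp only [gfun]
              rw [if_neg (by omega), if_neg (by omega)]
            rw [hg, Polynomial.coeff_zero]
            split_ifs with e1 e2 e3 e4 <;> omega
    · rw [if_neg h2, Polynomial.coeff_zero]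
      split_ifs with e1 e2 e3 e4 <;> omega
  · rw [if_neg h1, if_neg h1]
    set t := I - (n - 1) with ht
    by_cases h2 : t ≤ J ∧ J < t + n
    · rw [if_pos h2]
      by_cases hJ1 : J = t + (n - k)
      · have hs : n - (J - t) = k := by omega
        rw [hs]
        have hcol : n - k ≤ J ∧ J ≤ 2 * n - 1 - k := by omega
        rw [if_pos hcol]
        have hgk : gfun n k k = Polynomial.X := by simp [gfun]
        rw [hgk, Polynomial.coeff_smul, Polynomial.coeff_X_one, nsmul_eq_mul, mul_one]
        split_ifs with e1 e2 e3 <;> push_cast <;> omega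
      · by_cases hJ2 : J = t
        · have hs : n - (J - t) = n := by omega
          rw [hs]
          have hgn : gfun n k n = 1 := by simp [gfun]; omega
          rw [hgn]
          by_cases hc : n - k ≤ J ∧ J ≤ 2 * n - 1 - k
          · rw [if_pos hc, Polynomial.coeff_smul, Polynomial.coeff_one]
            norm_num [nsmul_eq_mul]
            split_ifs with e1 e2 e3 e4 <;> push_cast <;> omega
          · rw [if_neg hc, Polynomial.coeff_smul, Polynomial.coeff_one]
            norm_num [nsmul_eq_mul]
            split_ifs with e1 e2 e3 e4 <;> push_cast <;> omega
        · have hg : gfun n k (n - (J - t)) = 0 := by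
            simp only [gfun]
            rw [if_neg (by omega), if_neg (by omega)]
          rw [hg, smul_zero, Polynomial.coeff_zero]
          split_ifs with e1 e2 e3 <;> push_cast <;> omega
    · rw [if_neg h2, Polynomial.coeff_zero]
      split_ifs with e1 e2 e3 <;> push_cast <;> omega

noncomputable def Kmat (n k : ℕ) (x r : ℕ) : ℚ :=
  let d : ℚ := (k : ℚ) - n
  if x < n - k then (if r = x then k / d else if r = (n - 1) + x then -1 / d else 0)
  else if x < 2 * (n - k) then
    (if r = x - (n - k) then -(n : ℚ) / d else if r = (n - 1) + (x - (n - k)) then 1 / d else 0)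
  else if x ≤ 2 * n - 1 - k then (if r = x + k - 1 then 1 / (k : ℚ) else 0)
  else (if r = x - n then 1 else if r = x - 1 then -1 / (k : ℚ) else 0)

lemma fin_sum_two {m : ℕ} (f : Fin m → ℚ) (p q : ℕ) (hp : p < m) (hq : q < m) (hpq : p ≠ q)
    (a b : ℚ)
    (hf : ∀ x : Fin m, f x = (if (x : ℕ) = p then a else 0) + (if (x : ℕ) = q then b else 0)) :
    ∑ x, f x = a + b := by
  rw [Finset.sum_congr rfl (fun x _ => hf x), Finset.sum_add_distrib]
  have key : ∀ (c : ℚ) (t : ℕ), t < m → (∑ x : Fin m, if (x : ℕ) = t then c else 0) = c := by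
    intro c t ht
    rw [Finset.sum_eq_single (⟨t, ht⟩ : Fin m)]
    · simp
    · intro x _ hx
      rw [if_neg (fun h => hx (Fin.ext h))]
    · intro h; exact absurd (Finset.mem_univ _) h
  rw [key a p hp, key b q hq]

lemma fin_sum_one {m : ℕ} (f : Fin m → ℚ) (p : ℕ) (hp : p < m) (a : ℚ)
    (hf : ∀ x : Fin m, f x = if (x : ℕ) = p then a else 0) : ∑ x, f x = a := by
  rw [Finset.sum_congr rfl (fun x _ => hf x)]
  rw [Finset.sum_eq_single (⟨p, hp⟩ : Fin m)]
  · simp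
  · intro x _ hx
    rw [if_neg (fun h => hx (Fin.ext h))]
  · intro h; exact absurd (Finset.mem_univ _) h

lemma LK_eq_one (n k : ℕ) (hn : 2 ≤ n) (hk0 : 0 < k) (hkn : k < n) :
    (Matrix.of fun i j : Fin (2 * n - 1) => ((LexM n k (i : ℕ) (j : ℕ) : ℚ))) *
      (Matrix.of fun x j : Fin (2 * n - 1) => Kmat n k (x : ℕ) (j : ℕ)) = 1 := by
  have hd0 : (k : ℚ) - n ≠ 0 := by
    intro h
    have : (k : ℚ) = n := by linarith
    exact_mod_cast absurd this (by exact_mod_cast Nat.ne_of_lt hkn)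
  have hk0q : (k : ℚ) ≠ 0 := Nat.cast_ne_zero.2 (by omega)
  ext i j
  have hi := i.isLt
  have hj := j.isLt
  rw [Matrix.mul_apply]
  by_cases h1 : (i : ℕ) < n - 1
  · by_cases h2 : (i : ℕ) < n - k
    · -- row T1 : entries 1 at i and at i+(n-k)
      rw [fin_sum_two _ (i : ℕ) ((i : ℕ) + (n - k)) (by omega) (by omega) (by omega)
        (Kmat n k (i : ℕ) (j : ℕ)) (Kmat n k ((i : ℕ) + (n - k)) (j : ℕ)) ?hf]
      case hf =>
        intro x
        simp only [Matrix.of_apply, LexM, if_pos h1, if_pos h2]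
        by_cases e1 : (x : ℕ) = (i : ℕ)
        · rw [if_pos e1, e1, if_pos rfl, if_neg (by omega)]
          norm_num
        · rw [if_neg e1, if_neg e1]
          by_cases e2 : (x : ℕ) = (i : ℕ) + (n - k)
          · rw [if_pos e2, if_pos e2, e2]; norm_num
          · rw [if_neg e2, if_neg e2]; norm_num
      -- now evaluate the two K entries
      rw [show Kmat n k (i : ℕ) (j : ℕ)
            = (if (j : ℕ) = (i : ℕ) then (k : ℚ) / ((k : ℚ) - n)
               else if (j : ℕ) = (n - 1) + (i : ℕ) then -1 / ((k : ℚ) - n) else 0) by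
          simp only [Kmat]; rw [if_pos h2]]
      rw [show Kmat n k ((i : ℕ) + (n - k)) (j : ℕ)
            = (if (j : ℕ) = (i : ℕ) then -(n : ℚ) / ((k : ℚ) - n)
               else if (j : ℕ) = (n - 1) + (i : ℕ) then 1 / ((k : ℚ) - n) else 0) by
          simp only [Kmat]
          rw [if_neg (by omega), if_pos (by omega)]
          congr 2 <;> rw [show (i : ℕ) + (n - k) - (n - k) = (i : ℕ) by omega]]
      have hone : (1 : Matrix (Fin (2 * n - 1)) (Fin (2 * n - 1)) ℚ) i j
          = if (j : ℕ) = (i : ℕ) then 1 else 0 := by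
        rw [Matrix.one_apply]
        by_cases e : i = j
        · rw [if_pos e, if_pos (by rw [e])]
        · rw [if_neg e, if_neg (fun h => e (Fin.ext h.symm))]
      rw [hone]
      by_cases e1 : (j : ℕ) = (i : ℕ)
      · rw [if_pos e1, if_pos e1, if_pos e1]
        field_simp
        try ring
      · rw [if_neg e1, if_neg e1, if_neg e1]
        by_cases e2 : (j : ℕ) = (n - 1) + (i : ℕ)
        · rw [if_pos e2, if_pos e2]; ring
        · rw [if_neg e2, if_neg e2]; ring
    · -- row T2 : entries 1 at i+(n-k) and 1 at i+n
      rw [fin_sum_two _ ((i : ℕ) + (n - k)) ((i : ℕ) + n) (by omega) (by omega) (by omega)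
        (Kmat n k ((i : ℕ) + (n - k)) (j : ℕ)) (Kmat n k ((i : ℕ) + n) (j : ℕ)) ?hf]
      case hf =>
        intro x
        simp only [Matrix.of_apply, LexM, if_pos h1, if_neg h2]
        by_cases e1 : (x : ℕ) = (i : ℕ) + (n - k)
        · rw [if_pos e1, if_pos e1, if_neg (by omega), e1]; norm_num
        · rw [if_neg e1, if_neg e1]
          by_cases e2 : (x : ℕ) = (i : ℕ) + n
          · rw [if_pos e2, if_pos e2, e2]; norm_num
          · rw [if_neg e2, if_neg e2]; norm_num
      rw [show Kmat n k ((i : ℕ) + (n - k)) (j : ℕ)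
            = (if (j : ℕ) = (i : ℕ) + n - 1 then 1 / (k : ℚ) else 0) by
          simp only [Kmat]
          rw [if_neg (by omega), if_neg (by omega), if_pos (by omega)]
          congr 1
          rw [show (i : ℕ) + (n - k) + k - 1 = (i : ℕ) + n - 1 by omega]]
      rw [show Kmat n k ((i : ℕ) + n) (j : ℕ)
            = (if (j : ℕ) = (i : ℕ) then 1
               else if (j : ℕ) = (i : ℕ) + n - 1 then -1 / (k : ℚ) else 0) by
          simp only [Kmat]
          rw [if_neg (by omega), if_neg (by omega), if_neg (by omega),
            show (i : ℕ) + n - n = (i : ℕ) by omega]]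
      have hone : (1 : Matrix (Fin (2 * n - 1)) (Fin (2 * n - 1)) ℚ) i j
          = if (j : ℕ) = (i : ℕ) then 1 else 0 := by
        rw [Matrix.one_apply]
        by_cases e : i = j
        · rw [if_pos e, if_pos (by rw [e])]
        · rw [if_neg e, if_neg (fun h => e (Fin.ext h.symm))]
      rw [hone]
      by_cases e1 : (j : ℕ) = (i : ℕ)
      · rw [if_pos e1, if_pos e1, if_neg (by omega)]; ring
      · rw [if_neg e1, if_neg e1]
        by_cases e2 : (j : ℕ) = (i : ℕ) + n - 1
        · rw [if_pos e2, if_pos e2]; ring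
        · rw [if_neg e2, if_neg e2]; ring
  · by_cases h2 : (i : ℕ) < n - 1 + (n - k)
    · -- row B1 : n at t, k at t+(n-k), with t = i-(n-1) < n-k
      set t := (i : ℕ) - (n - 1) with hT
      rw [fin_sum_two _ t (t + (n - k)) (by omega) (by omega) (by omega)
        ((n : ℚ) * Kmat n k t (j : ℕ)) ((k : ℚ) * Kmat n k (t + (n - k)) (j : ℕ)) ?hf]
      case hf =>
        intro x
        simp only [Matrix.of_apply, LexM, if_neg h1, if_pos h2]
        by_cases e1 : (x : ℕ) = t
        · rw [if_pos e1, if_pos e1, if_neg (by omega), e1]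
          push_cast; ring
        · rw [if_neg e1, if_neg e1]
          by_cases e2 : (x : ℕ) = t + (n - k)
          · rw [if_pos e2, if_pos e2, e2]; push_cast; ring
          · rw [if_neg e2, if_neg e2]; norm_num
      rw [show Kmat n k t (j : ℕ)
            = (if (j : ℕ) = t then (k : ℚ) / ((k : ℚ) - n)
               else if (j : ℕ) = (n - 1) + t then -1 / ((k : ℚ) - n) else 0) by
          simp only [Kmat]; rw [if_pos (by omega)]]
      rw [show Kmat n k (t + (n - k)) (j : ℕ)
            = (if (j : ℕ) = t then -(n : ℚ) / ((k : ℚ) - n)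
               else if (j : ℕ) = (n - 1) + t then 1 / ((k : ℚ) - n) else 0) by
          simp only [Kmat]
          rw [if_neg (by omega), if_pos (by omega)]
          congr 2 <;> rw [show t + (n - k) - (n - k) = t by omega]]
      have hone : (1 : Matrix (Fin (2 * n - 1)) (Fin (2 * n - 1)) ℚ) i j
          = if (j : ℕ) = (n - 1) + t then 1 else 0 := by
        rw [Matrix.one_apply]
        by_cases e : i = j
        · rw [if_pos e, if_pos (by rw [← e]; omega)]
        · rw [if_neg e, if_neg (fun h => e (Fin.ext (by omega)))]
      rw [hone]
      by_cases e1 : (j : ℕ) = t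
      · rw [if_pos e1, if_pos e1, if_neg (by omega)]
        field_simp
        try ring
      · rw [if_neg e1, if_neg e1]
        by_cases e2 : (j : ℕ) = (n - 1) + t
        · rw [if_pos e2, if_pos e2, if_pos e2]
          field_simp
          try ring
        · rw [if_neg e2, if_neg e2, if_neg e2]; ring
    · -- row B2 : single entry k at t+(n-k), t = i-(n-1) ≥ n-k
      set t := (i : ℕ) - (n - 1) with hT
      rw [fin_sum_one _ (t + (n - k)) (by omega) ((k : ℚ) * Kmat n k (t + (n - k)) (j : ℕ)) ?hf]
      case hf =>
        intro x
        simp only [Matrix.of_apply, LexM, if_neg h1, if_neg h2]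
        by_cases e1 : (x : ℕ) = t + (n - k)
        · rw [if_pos e1, if_pos e1, e1]; push_cast; ring
        · rw [if_neg e1, if_neg e1]; norm_num
      rw [show Kmat n k (t + (n - k)) (j : ℕ)
            = (if (j : ℕ) = (n - 1) + t then 1 / (k : ℚ) else 0) by
          simp only [Kmat]
          rw [if_neg (by omega), if_neg (by omega), if_pos (by omega)]
          congr 1
          rw [show t + (n - k) + k - 1 = (n - 1) + t by omega]]
      have hone : (1 : Matrix (Fin (2 * n - 1)) (Fin (2 * n - 1)) ℚ) i j
          = if (j : ℕ) = (n - 1) + t then 1 else 0 := by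
        rw [Matrix.one_apply]
        by_cases e : i = j
        · rw [if_pos e, if_pos (by rw [← e]; omega)]
        · rw [if_neg e, if_neg (fun h => e (Fin.ext (by omega)))]
      rw [hone]
      by_cases e2 : (j : ℕ) = (n - 1) + t
      · rw [if_pos e2, if_pos e2]; field_simp
      · rw [if_neg e2, if_neg e2]; ring
lemma sum_cdeg (n k : ℕ) (hn : 2 ≤ n) (hk0 : 0 < k) (hkn : k < n) :
    (∑ j : Fin (2 * n - 1), cdeg n k (j : ℕ)) = n := by
  rw [Fin.sum_univ_eq_sum_range (fun j => cdeg n k j) (2 * n - 1)]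
  simp only [cdeg]
  rw [Finset.sum_boole]
  have : (Finset.range (2 * n - 1)).filter (fun j => n - k ≤ j ∧ j ≤ 2 * n - 1 - k)
      = Finset.Icc (n - k) (2 * n - 1 - k) := by
    ext x
    simp only [Finset.mem_filter, Finset.mem_range, Finset.mem_Icc]
    omega
  rw [this, Nat.card_Icc]
  simp only [Nat.cast_id]
  omega

lemma nd_bound (n k : ℕ) (hn : 2 ≤ n) (hk0 : 0 < k) (hkn : k < n) (i j : Fin (2 * n - 1)) :
    (sylv n (gfun n k) i j).natDegree ≤ cdeg n k (j : ℕ) := by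
  have hi := i.isLt
  have hj := j.isLt
  have hgd : ∀ s, (gfun n k s).natDegree ≤ 1 := by
    intro s
    simp only [gfun]
    split_ifs <;> simp
  have hgd0 : ∀ s, s ≠ k → (gfun n k s).natDegree = 0 := by
    intro s hs
    simp only [gfun]
    rw [if_neg hs]
    split_ifs <;> simp
  simp only [sylv, Matrix.of_apply, cdeg]
  by_cases hcol : n - k ≤ (j : ℕ) ∧ (j : ℕ) ≤ 2 * n - 1 - k
  · rw [if_pos hcol]
    split_ifs with h1 h2 h3
    · exact hgd _
    · simp
    · exact (Polynomial.natDegree_smul_le _ _).trans (hgd _)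
    · simp
  · rw [if_neg hcol]
    split_ifs with h1 h2 h3
    · rw [hgd0 _ (by omega)]
    · simp
    · exact (Polynomial.natDegree_smul_le _ _).trans_eq (hgd0 _ (by omega))
    · simp

lemma detLexM_ne (n k : ℕ) (hn : 2 ≤ n) (hk0 : 0 < k) (hkn : k < n) :
    (Matrix.of fun i j : Fin (2 * n - 1) => LexM n k (i : ℕ) (j : ℕ)).det ≠ 0 := by
  set A : Matrix (Fin (2 * n - 1)) (Fin (2 * n - 1)) ℤ :=
    Matrix.of fun i j => LexM n k (i : ℕ) (j : ℕ) with hA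
  intro h0
  have hmap : A.map (Int.castRingHom ℚ)
      = Matrix.of fun i j : Fin (2 * n - 1) => ((LexM n k (i : ℕ) (j : ℕ) : ℚ)) := by
    ext i j; simp [hA]
  have hdet : ((Int.castRingHom ℚ) A.det : ℚ) = (A.map (Int.castRingHom ℚ)).det :=
    RingHom.map_det _ _
  have h1 : (A.map (Int.castRingHom ℚ)).det = 0 := by
    rw [← hdet, h0]; simp
  have h2 := LK_eq_one n k hn hk0 hkn
  rw [← hmap] at h2
  have h3 := congrArg Matrix.det h2
  rw [Matrix.det_mul, h1, zero_mul, Matrix.det_one] at h3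
  exact zero_ne_one h3

lemma cn_ne (n k : ℕ) (hn : 2 ≤ n) (hk0 : 0 < k) (hkn : k < n)
    (D : MvPolynomial ℕ ℤ) (c : ℕ → MvPolynomial ℕ ℤ)
    (hD : X n * D = (-1) ^ (n * (n - 1) / 2) * (sylv n X).det)
    (hc : ∀ j, (c j).degreeOf k = 0)
    (hsum : D = ∑ j ∈ Finset.range (n + 1), c j * X k ^ j) :
    c n ≠ 0 := by
  intro h0
  set φ : MvPolynomial ℕ ℤ →+* Polynomial ℤ := eval₂Hom Polynomial.C (gfun n k) with hφ
  have hgX : ∀ i, φ (X i) = gfun n k i := fun i => eval₂Hom_X' _ _ _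
  have hXn : φ (X n) = 1 := by
    rw [hgX]; simp only [gfun]; rw [if_neg (show ¬ n = k by omega)]; simp
  have hmapsylv : (sylv n X).map φ = sylv n (gfun n k) := by
    rw [sylv_map φ n X]
    have hfg : (fun i => φ (X i)) = gfun n k := funext hgX
    rw [hfg]
  have hD2 : φ D = (-1) ^ (n * (n - 1) / 2) * (sylv n (gfun n k)).det := by
    have := congrArg φ hD
    rw [map_mul, hXn, one_mul, map_mul, map_pow, map_neg, map_one] at this
    rw [this, RingHom.map_det, RingHom.mapMatrix_apply, hmapsylv]
  -- the coefficient of X^n in φ D is nonzero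
  have hco : (φ D).coeff n ≠ 0 := by
    rw [hD2]
    have hC : ((-1 : Polynomial ℤ) ^ (n * (n - 1) / 2))
        = Polynomial.C ((-1 : ℤ) ^ (n * (n - 1) / 2)) := by
      rw [map_pow, map_neg, map_one]
    rw [hC, Polynomial.coeff_C_mul]
    have hcd := coeff_det (sylv n (gfun n k)) (fun j : Fin (2 * n - 1) => cdeg n k (j : ℕ))
      (fun i j => nd_bound n k hn hk0 hkn i j)
    rw [sum_cdeg n k hn hk0 hkn] at hcd
    rw [hcd]
    have heq : (Matrix.of fun i j : Fin (2 * n - 1) =>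
            ((sylv n (gfun n k)) i j).coeff (cdeg n k (j : ℕ)))
        = Matrix.of fun i j : Fin (2 * n - 1) => LexM n k (i : ℕ) (j : ℕ) := by
      ext i j
      exact Lentry n k hn hk0 hkn i j
    rw [heq]
    intro hz
    rcases mul_eq_zero.1 hz with h | h
    · exact pow_ne_zero _ (by norm_num) h
    · exact detLexM_ne n k hn hk0 hkn h
  -- but from the expansion, that coefficient is zero
  apply hco
  have hφsum : φ D = ∑ j ∈ Finset.range (n + 1), φ (c j) * Polynomial.X ^ j := by
    rw [hsum, map_sum]
    refine Finset.sum_congr rfl (fun j _ => ?_)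
    rw [map_mul, map_pow, hgX]
    simp [gfun]
  rw [hφsum, Polynomial.finset_sum_coeff]
  apply Finset.sum_eq_zero
  intro j hj
  rw [Polynomial.coeff_mul_X_pow']
  rcases Nat.lt_or_ge j n with hjn | hjn
  · rw [if_pos (by omega)]
    have hnd : (φ (c j)).natDegree = 0 := by
      apply natDegree_spec k (gfun n k) _ _ (hc j)
      intro s hs
      simp only [gfun]
      rw [if_neg hs]
      split_ifs <;> simp
    exact Polynomial.coeff_eq_zero_of_natDegree_lt (by omega)
  · have hjn' : j = n := by simp only [Finset.mem_range] at hj; omega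
    subst hjn'
    rw [if_pos (by omega), h0, map_zero, Polynomial.coeff_zero]
lemma weight_single (s : ℕ) (e : ℕ) : Finsupp.weight w1 (Finsupp.single s e) = (e : ℤ) := by
  simp [Finsupp.weight_apply, Finsupp.sum_single_index]

lemma wh_mul_X_cancel {p : MvPolynomial ℕ ℤ} {d : ℤ} (s : ℕ)
    (h : (X s * p).IsWeightedHomogeneous w1 d) : p.IsWeightedHomogeneous w1 (d - 1) := by
  intro m hm
  have h2 : coeff (Finsupp.single s 1 + m) (X s * p) ≠ 0 := by
    rw [coeff_X_mul]; exact hm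
  have h3 := h h2
  rw [map_add, weight_single] at h3
  omega

lemma wh_sylvX (n : ℕ) (hn : 2 ≤ n) :
    ((sylv n (X : ℕ → MvPolynomial ℕ ℤ)).det).IsWeightedHomogeneous w1 (2 * (n : ℤ) - 1) := by
  have h := wh_det (sylv n (X : ℕ → MvPolynomial ℕ ℤ)) (fun _ => 0) (fun _ => 1) ?hent
  case hent =>
    intro i j
    rw [zero_add]
    simp only [sylv, Matrix.of_apply]
    split_ifs with h1 h2 h3
    · have := isWeightedHomogeneous_X ℤ w1 (n - ((j : ℕ) - (i : ℕ)))
      simpa using this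
    · exact isWeightedHomogeneous_zero _ _ _
    · set a := n - ((j : ℕ) - ((i : ℕ) - (n - 1))) with ha
      have : (a • (X a : MvPolynomial ℕ ℤ)) = C (a : ℤ) * X a := by
        rw [nsmul_eq_mul, ← map_natCast (C : ℤ →+* MvPolynomial ℕ ℤ) a]
      rw [this]
      have hX := isWeightedHomogeneous_X ℤ w1 a
      have hC := isWeightedHomogeneous_C w1 ((a : ℤ))
      have := hC.mul hX
      simpa using this
    · exact isWeightedHomogeneous_zero _ _ _
  rw [Finset.sum_const, Finset.sum_const, Finset.card_univ, Fintype.card_fin] at h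
  have he : ((2 * n - 1 : ℕ) • (0 : ℤ)) + ((2 * n - 1 : ℕ) • (1 : ℤ)) = 2 * (n : ℤ) - 1 := by
    simp only [smul_zero, nsmul_eq_mul, mul_one, zero_add]
    omega
  rwa [he] at h

lemma wh_D (n : ℕ) (hn : 2 ≤ n) (D : MvPolynomial ℕ ℤ)
    (hD : X n * D = (-1) ^ (n * (n - 1) / 2) * (sylv n X).det) :
    D.IsWeightedHomogeneous w1 (2 * (n : ℤ) - 2) := by
  have h1 : (X n * D).IsWeightedHomogeneous w1 (2 * (n : ℤ) - 1) := by
    rw [hD]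
    have hC : ((-1 : MvPolynomial ℕ ℤ) ^ (n * (n - 1) / 2))
        = C ((-1 : ℤ) ^ (n * (n - 1) / 2)) := by
      rw [map_pow, map_neg, map_one]
    rw [hC]
    have := (isWeightedHomogeneous_C w1 ((-1 : ℤ) ^ (n * (n - 1) / 2))).mul (wh_sylvX n hn)
    simpa using this
  have := wh_mul_X_cancel n h1
  have he : 2 * (n : ℤ) - 1 - 1 = 2 * (n : ℤ) - 2 := by ring
  rwa [he] at this

section cw

variable (n k : ℕ) (hn : 2 ≤ n) (hk0 : 0 < k) (hkn : k < n)
  (D : MvPolynomial ℕ ℤ) (c : ℕ → MvPolynomial ℕ ℤ)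
  (hc : ∀ j, (c j).degreeOf k = 0)
  (hsum : D = ∑ j ∈ Finset.range (n + 1), c j * X k ^ j)

include hc in
lemma supp_c : ∀ j (m : ℕ →₀ ℕ), coeff m (c j) ≠ 0 → m k = 0 := by
  intro j m hm
  have h1 := MvPolynomial.degreeOf_eq_sup k (c j) ▸ hc j
  have h2 : m k ≤ (c j).support.sup fun m => m k :=
    Finset.le_sup (f := fun m => m k) (MvPolynomial.mem_support_iff.2 hm)
  omega

include hc hsum in
lemma coeff_c_eq (j : ℕ) (hj : j ≤ n) (m : ℕ →₀ ℕ) (hmk : m k = 0) :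
    coeff (m + Finsupp.single k j) D = coeff m (c j) := by
  rw [hsum, MvPolynomial.coeff_sum]
  rw [Finset.sum_eq_single j]
  · rw [X_pow_eq_monomial, coeff_mul_monomial']
    rw [if_pos (Finsupp.single_le_iff.2 (by simp [Finsupp.add_apply, hmk]))]
    rw [add_tsub_cancel_right, mul_one]
  · intro i _ hij
    rw [X_pow_eq_monomial, coeff_mul_monomial']
    by_cases hle : Finsupp.single k i ≤ m + Finsupp.single k j
    · rw [if_pos hle, mul_one]
      by_contra hne
      have hk0' := supp_c k c hc i _ hne
      have hle2 : i ≤ j := by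
        have := Finsupp.single_le_iff.1 hle
        simp only [Finsupp.add_apply, hmk, Finsupp.single_eq_same, zero_add] at this
        exact this
      rw [Finsupp.tsub_apply, Finsupp.add_apply, hmk, Finsupp.single_eq_same,
        Finsupp.single_eq_same, zero_add] at hk0'
      omega
    · rw [if_neg hle]
  · intro hnj
    exact absurd (Finset.mem_range.2 (by omega)) hnj

end cw

lemma wh_c (n k : ℕ) (hn : 2 ≤ n) (D : MvPolynomial ℕ ℤ) (c : ℕ → MvPolynomial ℕ ℤ)
    (hc : ∀ j, (c j).degreeOf k = 0)
    (hsum : D = ∑ j ∈ Finset.range (n + 1), c j * X k ^ j)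
    (hD : X n * D = (-1) ^ (n * (n - 1) / 2) * (sylv n X).det)
    (j : ℕ) (hj : j ≤ n) :
    (c j).IsWeightedHomogeneous w1 (2 * (n : ℤ) - 2 - j) := by
  intro m hm
  have hmk := supp_c k c hc j m hm
  have h2 : coeff (m + Finsupp.single k j) D ≠ 0 := by
    rw [coeff_c_eq n k D c hc hsum j hj m hmk]; exact hm
  have h3 := wh_D n hn D hD h2
  rw [map_add, weight_single] at h3
  omega
def rfun (n : ℕ) (i : ℕ) : ℤ := if i < n - 1 then (n : ℤ) - 2 - i else 2 * (n : ℤ) - 3 - i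

lemma wh_sylvC (n k : ℕ) (hn : 2 ≤ n) (hk0 : 0 < k) (hkn : k < n)
    (D : MvPolynomial ℕ ℤ) (c : ℕ → MvPolynomial ℕ ℤ)
    (hc : ∀ j, (c j).degreeOf k = 0)
    (hsum : D = ∑ j ∈ Finset.range (n + 1), c j * X k ^ j)
    (hD : X n * D = (-1) ^ (n * (n - 1) / 2) * (sylv n X).det) :
    ((sylv n c).det).IsWeightedHomogeneous w1
      ((∑ i : Fin (2 * n - 1), rfun n (i : ℕ)) + ∑ j : Fin (2 * n - 1), ((j : ℕ) : ℤ)) := by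
  apply wh_det _ (fun i => rfun n (i : ℕ)) (fun j => ((j : ℕ) : ℤ))
  intro i j
  have hi := i.isLt
  have hj := j.isLt
  simp only [sylv, Matrix.of_apply]
  split_ifs with h1 h2 h3
  · have hwc := wh_c n k hn D c hc hsum hD (n - ((j : ℕ) - (i : ℕ))) (by omega)
    have e : 2 * (n : ℤ) - 2 - ((n - ((j : ℕ) - (i : ℕ)) : ℕ) : ℤ)
        = rfun n (i : ℕ) + ((j : ℕ) : ℤ) := by
      simp only [rfun]; rw [if_pos h1]; omega
    exact e ▸ hwc
  · exact isWeightedHomogeneous_zero _ _ _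
  · set a := n - ((j : ℕ) - ((i : ℕ) - (n - 1))) with ha
    have hsm : (a • c a) = C (a : ℤ) * c a := by
      rw [nsmul_eq_mul, ← map_natCast (C : ℤ →+* MvPolynomial ℕ ℤ) a]
    rw [hsm]
    have hwc := wh_c n k hn D c hc hsum hD a (by omega)
    have := (isWeightedHomogeneous_C w1 ((a : ℤ))).mul hwc
    rw [zero_add] at this
    have e : 2 * (n : ℤ) - 2 - (a : ℤ) = rfun n (i : ℕ) + ((j : ℕ) : ℤ) := by
      simp only [rfun]; rw [if_neg h1]; omega
    exact e ▸ this
  · exact isWeightedHomogeneous_zero _ _ _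

lemma sum_degs (n : ℕ) (hn : 2 ≤ n) :
    (∑ i : Fin (2 * n - 1), rfun n (i : ℕ)) + (∑ j : Fin (2 * n - 1), ((j : ℕ) : ℤ))
      = ((n : ℤ) - 2) + (3 * (n : ℤ) - 4) * ((n : ℤ) - 1) := by
  rw [Fin.sum_univ_eq_sum_range (fun i => rfun n i) (2 * n - 1),
    Fin.sum_univ_eq_sum_range (fun j => ((j : ℕ) : ℤ)) (2 * n - 1)]
  rw [← Finset.sum_add_distrib]
  have hcong : ∀ t ∈ Finset.range (2 * n - 1),
      rfun n t + (t : ℤ) = if t < n - 1 then (n : ℤ) - 2 else 2 * (n : ℤ) - 3 := by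
    intro t _
    simp only [rfun]
    split_ifs <;> ring
  rw [Finset.sum_congr rfl hcong, Finset.sum_ite]
  rw [Finset.sum_const, Finset.sum_const]
  have hf1 : (Finset.range (2 * n - 1)).filter (fun t => t < n - 1) = Finset.range (n - 1) := by
    ext x
    simp only [Finset.mem_filter, Finset.mem_range]
    omega
  have hf2 : (Finset.range (2 * n - 1)).filter (fun t => ¬ t < n - 1)
      = Finset.Ico (n - 1) (2 * n - 1) := by
    ext x
    simp only [Finset.mem_filter, Finset.mem_range, Finset.mem_Ico]
    omega
  rw [hf1, hf2, Finset.card_range, Nat.card_Ico]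
  have e1 : ((n - 1 : ℕ) : ℤ) = (n : ℤ) - 1 := by omega
  have e2 : ((2 * n - 1 - (n - 1) : ℕ) : ℤ) = (n : ℤ) := by omega
  rw [nsmul_eq_mul, nsmul_eq_mul, e1, e2]
  ring


/-- For `0 < k < n`, the double discriminant `DD_{n,k} = disc_{a_k}(D_n)`
(characterized, writing `D_n = ∑_{j=0}^n c_j a_k^j` with the `c_j` free of `a_k`, by
`c_n · DD = ± Res_{a_k}(D_n, ∂D_n/∂a_k)`) is a homogeneous polynomial of total degree
`(3n-4)(n-1)` in the variables `a_0, …, â_k, …, a_n`. -/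
theorem stmt9 (n k : ℕ) (hn : 2 ≤ n) (hk0 : 0 < k) (hkn : k < n)
    (D DD : MvPolynomial ℕ ℤ) (c : ℕ → MvPolynomial ℕ ℤ)
    (hD : X n * D = (-1) ^ (n * (n - 1) / 2) * (sylv n X).det)
    (hc : ∀ j, (c j).degreeOf k = 0)
    (hsum : D = ∑ j ∈ Finset.range (n + 1), c j * X k ^ j)
    (hDD : c n * DD = (-1) ^ (n * (n - 1) / 2) * (sylv n c).det) :
    DD.IsHomogeneous ((3 * n - 4) * (n - 1)) := by
  -- weighted homogeneity of the product c n * DD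
  have hwprod : (c n * DD).IsWeightedHomogeneous w1
      (((n : ℤ) - 2) + (3 * (n : ℤ) - 4) * ((n : ℤ) - 1)) := by
    rw [hDD]
    have hC : ((-1 : MvPolynomial ℕ ℤ) ^ (n * (n - 1) / 2))
        = C ((-1 : ℤ) ^ (n * (n - 1) / 2)) := by
      rw [map_pow, map_neg, map_one]
    rw [hC]
    have hdet := wh_sylvC n k hn hk0 hkn D c hc hsum hD
    rw [sum_degs n hn] at hdet
    have := (isWeightedHomogeneous_C w1 ((-1 : ℤ) ^ (n * (n - 1) / 2))).mul hdet
    simpa using this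
  -- convert to ℕ-homogeneity
  have hcast : (((n - 2 + (3 * n - 4) * (n - 1) : ℕ)) : ℤ)
      = ((n : ℤ) - 2) + (3 * (n : ℤ) - 4) * ((n : ℤ) - 1) := by
    have e1 : ((3 * n - 4 : ℕ) : ℤ) = 3 * (n : ℤ) - 4 := by omega
    have e2 : ((n - 1 : ℕ) : ℤ) = (n : ℤ) - 1 := by omega
    have e3 : ((n - 2 : ℕ) : ℤ) = (n : ℤ) - 2 := by omega
    push_cast [← e1, ← e2, ← e3]
    push_cast
    ring
  have hprodh : (c n * DD).IsHomogeneous (n - 2 + (3 * n - 4) * (n - 1)) := by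
    apply wh_to_homog
    rw [hcast]
    exact hwprod
  -- homogeneity of c n
  have hcn : (c n).IsHomogeneous (n - 2) := by
    apply wh_to_homog
    have := wh_c n k hn D c hc hsum hD n le_rfl
    have e : 2 * (n : ℤ) - 2 - (n : ℤ) = ((n - 2 : ℕ) : ℤ) := by omega
    rwa [e] at this
  exact homog_of_mul (cn_ne n k hn hk0 hkn D c hD hc hsum) hcn hprodh
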